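/- Value of the fourth-order 2-point function at zero momenta: define, for real p₁, p₂ > 0 with p₁ ≠ p₂, G₄(p₁,p₂) := (2/((1+p₁+p₂)²(p₁−p₂))) · [ 3(log(1+p₁) − log(1+p₂))²/((1+p₁+p₂)(p₁−p₂)) + 2log(1+p₁)/(p₁(1+2p₁)(1+p₁)) − 2log(1+p₂)/(p₂(1+2p₂)(1+p₂)) − (1+2p₂)(π²/6 − 2Li₂(−p₁) − log²(1+p₁))/((1+2p₁)²(1+p₁+p₂)) + (1+2p₁)(π²/6 − 2Li₂(−p₂) − log²(1+p₂))/((1+2p₂)²(1+p₁+p₂)) ]. Then G₄(p₁,p₂) tends to 2(π² − 6) as (p₁,p₂) → (0,0) within the set {(p₁,p₂) : p₁ > 0, p₂ > 0, p₁ ≠ p₂}. -/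

import Mathlib

/-!
Write `ℓ(p) = log (1 + p)`, `f(p) = 2ℓ(p)/(p(1+2p)(1+p))`, `k(p) = (π²/6 − 2Li₂(−p) − ℓ(p)²)/(1+2p)²`
and `s = 1 + p₁ + p₂`. Since `(1+2p₁)k(p₂) − (1+2p₂)k(p₁) = 2(p₁−p₂)k(p₁) − (1+2p₁)(k(p₁) − k(p₂))`,
`G₄ = (2/s²)(3ℓ[p₁,p₂]²/s + f[p₁,p₂] + (2k(p₁) − (1+2p₁)k[p₁,p₂])/s)` with divided differences
`F[p₁,p₂] = (F(p₁) − F(p₂))/(p₁ − p₂)`. By the mean value theorem `F[p₁,p₂]` tends to `lim_{p→0⁺} F'(p)`,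
and from `ℓ(p) = p − p²/2 + O(p³)` and `(Li₂(−p))' = −ℓ(p)/p` one gets `ℓ' → 1`, `f' → −7`,
`k' → 2 − 2π²/3`, while `k → π²/6`. Hence `G₄ → 2(3 − 7 + π²/3 − 2 + 2π²/3) = 2(π² − 6)`.
-/

open MeasureTheory Real Filter

/-- The real dilogarithm, `Li₂(x) = −∫₀ˣ log(1−u)/u du`. -/
noncomputable def Li2 (x : ℝ) : ℝ := -∫ u in (0:ℝ)..x, Real.log (1 - u) / u

/-- The fourth-order 2-point function `G₄(p₁,p₂)` of the 2D noncommutative 3-colour model. -/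
noncomputable def G4 (p₁ p₂ : ℝ) : ℝ :=
  (2 / ((1 + p₁ + p₂) ^ 2 * (p₁ - p₂))) *
    (3 * (Real.log (1 + p₁) - Real.log (1 + p₂)) ^ 2 / ((1 + p₁ + p₂) * (p₁ - p₂))
      + 2 * Real.log (1 + p₁) / (p₁ * (1 + 2 * p₁) * (1 + p₁))
      - 2 * Real.log (1 + p₂) / (p₂ * (1 + 2 * p₂) * (1 + p₂))
      - (1 + 2 * p₂) * (π ^ 2 / 6 - 2 * Li2 (-p₁) - Real.log (1 + p₁) ^ 2)
          / ((1 + 2 * p₁) ^ 2 * (1 + p₁ + p₂))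
      + (1 + 2 * p₁) * (π ^ 2 / 6 - 2 * Li2 (-p₂) - Real.log (1 + p₂) ^ 2)
          / ((1 + 2 * p₂) ^ 2 * (1 + p₁ + p₂)))

open Set Topology

theorem abs_log_one_add_sub_self_add_sq_div_two_le {p : ℝ} (hp : |p| < 1) :
    |log (1 + p) - p + p ^ 2 / 2| ≤ |p| ^ 3 / (1 - |p|) := by
  have h := abs_log_sub_add_sum_range_le (x := -p) (by rwa [abs_neg]) 2
  rw [abs_neg] at h
  convert h using 2
  simp only [Finset.sum_range_succ, Finset.sum_range_zero, sub_neg_eq_add]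
  norm_num
  ring

theorem tendsto_sub_log_one_add_div_sq :
    Tendsto (fun p : ℝ => (p - log (1 + p)) / p ^ 2) (𝓝[≠] 0) (𝓝 (1 / 2)) := by
  rw [tendsto_iff_norm_sub_tendsto_zero]
  have hbound : Tendsto (fun p : ℝ => |p| / (1 - |p|)) (𝓝[≠] 0) (𝓝 0) := by
    have : ContinuousAt (fun p : ℝ => |p| / (1 - |p|)) 0 := by
      fun_prop (disch := norm_num)
    simpa using this.tendsto.mono_left nhdsWithin_le_nhds
  refine squeeze_zero_norm' ?_ hbound
  have hsmall : ∀ᶠ p : ℝ in 𝓝[≠] 0, |p| < 1 := nhdsWithin_le_nhds <|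
    (continuous_abs.tendsto (0 : ℝ)).eventually (gt_mem_nhds (by norm_num))
  filter_upwards [hsmall, self_mem_nhdsWithin] with p hp1 hp0
  have hp0 : p ≠ 0 := hp0
  have key : (p - log (1 + p)) / p ^ 2 - 1 / 2 = -(log (1 + p) - p + p ^ 2 / 2) / p ^ 2 := by
    field_simp; ring
  rw [key, norm_norm, Real.norm_eq_abs, abs_div, abs_neg, abs_of_pos (by positivity : 0 < p ^ 2),
    div_le_iff₀ (by positivity)]
  calc |log (1 + p) - p + p ^ 2 / 2| ≤ |p| ^ 3 / (1 - |p|) :=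
        abs_log_one_add_sub_self_add_sq_div_two_le hp1
    _ = |p| / (1 - |p|) * p ^ 2 := by rw [← sq_abs p]; ring

theorem tendsto_log_one_add_div :
    Tendsto (fun p : ℝ => log (1 + p) / p) (𝓝[≠] 0) (𝓝 1) := by
  have h := (tendsto_id.mono_left nhdsWithin_le_nhds).mul tendsto_sub_log_one_add_div_sq
  have h' := (tendsto_const_nhds (x := (1 : ℝ))).sub h
  rw [zero_mul, sub_zero] at h'
  refine h'.congr' (eventually_mem_nhdsWithin.mono fun p (hp : p ≠ 0) => ?_)
  simp only [id]
  field_simp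
  ring

theorem hasDerivAt_log_one_add {p : ℝ} (hp : -1 < p) :
    HasDerivAt (fun t => log (1 + t)) (1 / (1 + p)) p :=
  ((hasDerivAt_id p).const_add 1).log (by linarith : 0 < 1 + p).ne'

theorem hasDerivAt_log_one_add_div {p : ℝ} (hp : -1 < p) (hp₀ : p ≠ 0) :
    HasDerivAt (fun t => log (1 + t) / t) ((p - log (1 + p)) / p ^ 2 - 1 / (1 + p)) p := by
  refine ((hasDerivAt_log_one_add hp).fun_div (hasDerivAt_id' p) hp₀).congr_deriv ?_
  have : 1 + p ≠ 0 := (by linarith : 0 < 1 + p).ne'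
  field_simp
  ring

theorem norm_log_one_sub_div_le_one {u : ℝ} (hu : u ≤ 0) : ‖log (1 - u) / u‖ ≤ 1 := by
  rcases hu.eq_or_lt with rfl | hu
  · simp
  rw [norm_div, Real.norm_of_nonneg (log_nonneg (by linarith)), Real.norm_of_nonpos hu.le,
    div_le_one (by linarith)]
  linarith [log_le_sub_one_of_pos (by linarith : 0 < 1 - u)]

theorem measurable_log_one_sub_div : Measurable fun u : ℝ => log (1 - u) / u :=
  (measurable_log.comp (measurable_const.sub measurable_id)).div measurable_id

theorem intervalIntegrable_log_one_sub_div {x : ℝ} (hx : x ≤ 0) :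
    IntervalIntegrable (fun u => log (1 - u) / u) volume 0 x := by
  rw [intervalIntegrable_iff, uIoc_of_ge hx]
  refine (integrable_const (1 : ℝ)).mono' measurable_log_one_sub_div.aestronglyMeasurable ?_
  filter_upwards [ae_restrict_mem measurableSet_Ioc] with u hu
  exact norm_log_one_sub_div_le_one hu.2

theorem hasDerivAt_Li2 {x : ℝ} (hx : x < 0) : HasDerivAt Li2 (-(log (1 - x) / x)) x :=
  (intervalIntegral.integral_hasDerivAt_right (intervalIntegrable_log_one_sub_div hx.le)
    measurable_log_one_sub_div.stronglyMeasurable.stronglyMeasurableAtFilter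
    (by fun_prop (disch := linarith))).neg

theorem abs_Li2_le {x : ℝ} (hx : x ≤ 0) : |Li2 x| ≤ |x| := by
  rw [Li2, abs_neg]
  simpa using intervalIntegral.norm_integral_le_of_norm_le_const (a := 0) (b := x) (C := 1)
    fun u hu => norm_log_one_sub_div_le_one (uIoc_of_ge hx ▸ hu).2

theorem tendsto_Li2_neg_nhdsGT : Tendsto (fun p => Li2 (-p)) (𝓝[>] 0) (𝓝 0) := by
  refine squeeze_zero_norm' ?_ (tendsto_id.mono_left nhdsWithin_le_nhds)
  filter_upwards [self_mem_nhdsWithin] with p (hp : 0 < p)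
  simpa [abs_of_pos hp] using abs_Li2_le (neg_nonpos.mpr hp.le)

theorem hasDerivAt_Li2_neg {p : ℝ} (hp : 0 < p) :
    HasDerivAt (fun t => Li2 (-t)) (-(log (1 + p) / p)) p := by
  refine ((hasDerivAt_Li2 (neg_lt_zero.2 hp)).comp p (hasDerivAt_neg p)).congr_deriv ?_
  rw [sub_neg_eq_add, div_neg, neg_neg, mul_neg_one]

theorem tendsto_slope_of_tendsto_deriv_nhdsGT {F F' : ℝ → ℝ} {a L : ℝ}
    (hF : ∀ x ∈ Ioi a, HasDerivAt F (F' x) x) (hF' : Tendsto F' (𝓝[>] a) (𝓝 L)) :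
    Tendsto (fun x : ℝ × ℝ => slope F x.1 x.2)
      (𝓝[{x | a < x.1 ∧ a < x.2 ∧ x.1 ≠ x.2}] (a, a)) (𝓝 L) := by
  intro U hU
  rw [mem_map]
  obtain ⟨b, hab, hb⟩ := mem_nhdsGT_iff_exists_Ioo_subset.1 (hF' hU)
  have hmvt : ∀ p q, a < p → p < q → q < b → slope F p q ∈ U := fun p q hp hpq hq => by
    obtain ⟨c, hc, hFc⟩ := exists_hasDerivAt_eq_slope F F' hpq
      (fun x hx => (hF x (hp.trans_le hx.1)).continuousAt.continuousWithinAt)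
      (fun x hx => hF x (hp.trans hx.1))
    rw [slope_def_field, ← hFc]
    exact hb ⟨hp.trans hc.1, hc.2.trans hq⟩
  have hnear : ∀ᶠ x : ℝ × ℝ in 𝓝 (a, a), x.1 < b ∧ x.2 < b :=
    (continuous_fst.tendsto _).eventually (gt_mem_nhds hab) |>.and
      ((continuous_snd.tendsto _).eventually (gt_mem_nhds hab))
  filter_upwards [self_mem_nhdsWithin, nhdsWithin_le_nhds hnear]
    with ⟨p, q⟩ ⟨hp, hq, hpq⟩ ⟨hpb, hqb⟩
  rcases hpq.lt_or_gt with hpq | hqp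
  · exact hmvt p q hp hpq hqb
  · rw [Set.mem_preimage, slope_comm]
    exact hmvt q p hq hqp hpb

theorem tendsto_slope_log_one_add :
    Tendsto (fun x : ℝ × ℝ => slope (fun t => log (1 + t)) x.1 x.2)
      (𝓝[{x | 0 < x.1 ∧ 0 < x.2 ∧ x.1 ≠ x.2}] (0, 0)) (𝓝 1) := by
  refine tendsto_slope_of_tendsto_deriv_nhdsGT
    (fun p (hp : 0 < p) => hasDerivAt_log_one_add (by linarith)) ?_
  have h : ContinuousAt (fun p : ℝ => 1 / (1 + p)) 0 := by fun_prop (disch := norm_num)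
  simpa using h.tendsto.mono_left nhdsWithin_le_nhds

namespace G4

noncomputable def logTerm (p : ℝ) : ℝ := 2 * log (1 + p) / (p * (1 + 2 * p) * (1 + p))

noncomputable def dilogTerm (p : ℝ) : ℝ :=
  (π ^ 2 / 6 - 2 * Li2 (-p) - log (1 + p) ^ 2) / (1 + 2 * p) ^ 2

theorem eq_slope {p q : ℝ} (hpq : p ≠ q) :
    G4 p q = 2 / (1 + p + q) ^ 2 * (3 * slope (fun t => log (1 + t)) p q ^ 2 / (1 + p + q)
      + slope logTerm p q
      + (2 * dilogTerm p - (1 + 2 * p) * slope dilogTerm p q) / (1 + p + q)) := by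
  -- the only cancellation is `(p - q) / (p - q) = 1`, in the coefficient of `2 * dilogTerm p`
  have h : (p - q) * (p - q)⁻¹ = 1 := mul_inv_cancel₀ (sub_ne_zero.2 hpq)
  simp only [G4, logTerm, dilogTerm, slope_def_field, ← neg_sub p q, div_eq_mul_inv, mul_inv,
    inv_neg]
  linear_combination 4 * (π ^ 2 / 6 - 2 * Li2 (-p) - log (1 + p) ^ 2) * ((1 + 2 * p) ^ 2)⁻¹ *
    ((1 + p + q) ^ 2)⁻¹ * (1 + p + q)⁻¹ * h

theorem tendsto_slope_logTerm :
    Tendsto (fun x : ℝ × ℝ => slope logTerm x.1 x.2)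
      (𝓝[{x | 0 < x.1 ∧ 0 < x.2 ∧ x.1 ≠ x.2}] (0, 0)) (𝓝 (-7)) := by
  set φ := fun t : ℝ => log (1 + t) / t
  set φ' := fun t : ℝ => (t - log (1 + t)) / t ^ 2 - 1 / (1 + t)
  set D := fun t : ℝ => (1 + 2 * t) * (1 + t)
  have hlogTerm : logTerm = fun t => 2 * φ t / D t := by
    funext t; simp only [logTerm, φ, D, mul_div_assoc', div_div, mul_assoc]
  have hD : ∀ t, HasDerivAt D (3 + 4 * t) t := fun t => by
    refine ((((hasDerivAt_id' t).const_mul 2).const_add 1).mul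
      ((hasDerivAt_id' t).const_add 1)).congr_deriv ?_
    ring
  refine tendsto_slope_of_tendsto_deriv_nhdsGT
    (F' := fun t => (2 * φ' t * D t - 2 * φ t * (3 + 4 * t)) / D t ^ 2)
    (fun t (ht : 0 < t) => hlogTerm ▸
      ((hasDerivAt_log_one_add_div (by linarith) ht.ne').const_mul 2).div (hD t) (by positivity)) ?_
  have hcont : ∀ g : ℝ → ℝ, ContinuousAt g 0 → Tendsto g (𝓝[>] 0) (𝓝 (g 0)) :=
    fun g hg => hg.tendsto.mono_left nhdsWithin_le_nhds
  have hφ : Tendsto φ (𝓝[>] 0) (𝓝 1) := tendsto_log_one_add_div.mono_left (nhdsGT_le_nhdsNE 0)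
  have hφ' : Tendsto φ' (𝓝[>] 0) (𝓝 (1 / 2 - 1)) := by
    simpa [φ'] using (tendsto_sub_log_one_add_div_sq.mono_left (nhdsGT_le_nhdsNE 0)).sub
      (hcont (fun t => 1 / (1 + t)) (by fun_prop (disch := norm_num)))
  have hD₀ : Tendsto D (𝓝[>] 0) (𝓝 1) := by simpa [D] using hcont D (by fun_prop)
  have hD'₀ : Tendsto (fun t : ℝ => 3 + 4 * t) (𝓝[>] 0) (𝓝 3) := by
    simpa using hcont (fun t : ℝ => 3 + 4 * t) (by fun_prop)
  have hval : (2 * (1 / 2 - 1) * 1 - 2 * 1 * 3) / 1 ^ 2 = (-7 : ℝ) := by norm_num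
  exact hval ▸ (((hφ'.const_mul 2).mul hD₀).sub ((hφ.const_mul 2).mul hD'₀)).div (hD₀.pow 2)
    (by norm_num)

theorem tendsto_dilogTerm : Tendsto dilogTerm (𝓝[>] 0) (𝓝 (π ^ 2 / 6)) := by
  have hlog : Tendsto (fun p : ℝ => log (1 + p)) (𝓝[>] 0) (𝓝 0) := by
    have h : ContinuousAt (fun p : ℝ => log (1 + p)) 0 := by fun_prop (disch := norm_num)
    simpa using h.tendsto.mono_left nhdsWithin_le_nhds
  have hden : Tendsto (fun p : ℝ => (1 + 2 * p) ^ 2) (𝓝[>] 0) (𝓝 1) := by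
    have h : Continuous (fun p : ℝ => (1 + 2 * p) ^ 2) := by fun_prop
    simpa using (h.tendsto 0).mono_left nhdsWithin_le_nhds
  have hval : (π ^ 2 / 6 - 2 * 0 - 0 ^ 2) / 1 = π ^ 2 / 6 := by norm_num
  exact hval ▸ (((tendsto_const_nhds).sub (tendsto_Li2_neg_nhdsGT.const_mul 2)).sub (hlog.pow 2)).div
    hden one_ne_zero

theorem tendsto_slope_dilogTerm :
    Tendsto (fun x : ℝ × ℝ => slope dilogTerm x.1 x.2)
      (𝓝[{x | 0 < x.1 ∧ 0 < x.2 ∧ x.1 ≠ x.2}] (0, 0)) (𝓝 (2 - 2 * π ^ 2 / 3)) := by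
  set h' := fun t : ℝ => 2 * (log (1 + t) / t) - 2 * log (1 + t) / (1 + t)
  have hderiv : ∀ t : ℝ, 0 < t →
      HasDerivAt dilogTerm (h' t / (1 + 2 * t) ^ 2 - dilogTerm t * 4 / (1 + 2 * t)) t := by
    intro t ht
    have hnum : HasDerivAt (fun t => π ^ 2 / 6 - 2 * Li2 (-t) - log (1 + t) ^ 2) (h' t) t := by
      refine (((hasDerivAt_const t _).sub ((hasDerivAt_Li2_neg ht).const_mul 2)).sub
        ((hasDerivAt_log_one_add (by linarith)).pow 2)).congr_deriv ?_
      simp only [h']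
      ring
    have hden : HasDerivAt (fun t : ℝ => (1 + 2 * t) ^ 2) (4 * (1 + 2 * t)) t := by
      refine ((((hasDerivAt_id' t).const_mul 2).const_add 1).pow 2).congr_deriv ?_
      ring
    refine (hnum.div hden (by positivity)).congr_deriv ?_
    simp only [dilogTerm]
    field_simp
  refine tendsto_slope_of_tendsto_deriv_nhdsGT hderiv ?_
  have hcont : ∀ g : ℝ → ℝ, ContinuousAt g 0 → Tendsto g (𝓝[>] 0) (𝓝 (g 0)) :=
    fun g hg => hg.tendsto.mono_left nhdsWithin_le_nhds
  have hφ : Tendsto (fun t => log (1 + t) / t) (𝓝[>] 0) (𝓝 1) :=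
    tendsto_log_one_add_div.mono_left (nhdsGT_le_nhdsNE 0)
  have hh' : Tendsto h' (𝓝[>] 0) (𝓝 (2 * 1 - 0)) := by
    simpa using (hφ.const_mul 2).sub (hcont (fun t => 2 * log (1 + t) / (1 + t))
      (by fun_prop (disch := norm_num)))
  have hlin : Tendsto (fun t : ℝ => 1 + 2 * t) (𝓝[>] 0) (𝓝 1) := by
    simpa using hcont (fun t : ℝ => 1 + 2 * t) (by fun_prop)
  have hval : (2 * 1 - 0) / 1 ^ 2 - π ^ 2 / 6 * 4 / 1 = 2 - 2 * π ^ 2 / 3 := by ring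
  exact hval ▸ (hh'.div (hlin.pow 2) (by norm_num)).sub (((tendsto_dilogTerm.mul_const 4).div hlin
    one_ne_zero))

end G4

open G4 in
/-- `G₄(p₁,p₂) → 2(π² − 6)` as `(p₁,p₂) → (0,0)` within
`{(p₁,p₂) : p₁ > 0, p₂ > 0, p₁ ≠ p₂}`. -/
theorem fourth_order_two_point_at_zero :
    Tendsto (fun x : ℝ × ℝ => G4 x.1 x.2)
      (nhdsWithin (0, 0) {x : ℝ × ℝ | 0 < x.1 ∧ 0 < x.2 ∧ x.1 ≠ x.2})
      (nhds (2 * (π ^ 2 - 6))) := by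
  set S := {x : ℝ × ℝ | 0 < x.1 ∧ 0 < x.2 ∧ x.1 ≠ x.2}
  have hcont : ∀ g : ℝ × ℝ → ℝ, Continuous g → Tendsto g (𝓝[S] (0, 0)) (𝓝 (g (0, 0))) :=
    fun g hg => (hg.tendsto _).mono_left nhdsWithin_le_nhds
  have hs : Tendsto (fun x : ℝ × ℝ => 1 + x.1 + x.2) (𝓝[S] (0, 0)) (𝓝 1) := by
    simpa using hcont (fun x => 1 + x.1 + x.2) (by fun_prop)
  have hp : Tendsto (fun x : ℝ × ℝ => 1 + 2 * x.1) (𝓝[S] (0, 0)) (𝓝 1) := by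
    simpa using hcont (fun x => 1 + 2 * x.1) (by fun_prop)
  have hfst : Tendsto Prod.fst (𝓝[S] (0, 0)) (𝓝[>] 0) :=
    tendsto_nhdsWithin_of_tendsto_nhds_of_eventually_within _
      ((continuous_fst.tendsto _).mono_left nhdsWithin_le_nhds)
      (eventually_mem_nhdsWithin.mono fun _ hx => hx.1)
  have hlim := ((tendsto_const_nhds (x := (2 : ℝ))).div (hs.pow 2) (by norm_num)).mul
    ((((tendsto_slope_log_one_add.pow 2).const_mul 3).div hs one_ne_zero).add
      tendsto_slope_logTerm |>.add
      ((((tendsto_dilogTerm.comp hfst).const_mul 2).sub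
        (hp.mul tendsto_slope_dilogTerm)).div hs one_ne_zero))
  have hval : 2 / 1 ^ 2 * (3 * 1 ^ 2 / 1 + -7 + (2 * (π ^ 2 / 6) - 1 * (2 - 2 * π ^ 2 / 3)) / 1)
      = 2 * (π ^ 2 - 6) := by ring
  exact hval ▸ hlim.congr' (eventually_mem_nhdsWithin.mono fun x hx => (eq_slope hx.2.2).symm)
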